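/- arXiv:2112.03664 — 5 statements merged into one kernel-verified Lean document; each statement's English description precedes it below -/
import Mathlib

section
/- Let p be a polynomial with complex coefficients of degree at most k with p(0) ≠ 0, and suppose that for every z ∈ ℂ with p(e^z) = 0 and every positive integer r, also p(e^{rz}) = 0. Then every root w of p satisfies w = exp(2πiν/j) for some j ∈ {1,…,k} and some ν ∈ {0,…,j−1}. -/
open Polynomial

/-!
Write a root `w = e^z` with `z = log w`; the hypothesis applied to `z` makes every power
`w ^ r`, `r ≥ 1`, a root of `p`. As `p` has at most `k` distinct roots, two of
`w, w², …, w^(k+1)` coincide, and cancelling (`w ≠ 0` because `p 0 ≠ 0`) gives `w ^ d = 1`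
for some `1 ≤ d ≤ k`.
-/

theorem exists_pow_eq_one_of_forall_pow_mem {M : Type*} [MonoidWithZero M]
    [IsLeftCancelMulZero M] {w : M} (hw : w ≠ 0) {S : Finset M}
    (hS : ∀ r, 1 ≤ r → w ^ r ∈ S) :
    ∃ d, 1 ≤ d ∧ d ≤ S.card ∧ w ^ d = 1 := by
  obtain ⟨a, ha, b, hb, hab, heq⟩ :=
    Finset.exists_ne_map_eq_of_card_lt_of_maps_to (s := Finset.Icc 1 (S.card + 1)) (t := S)
      (by simp) (fun r hr => hS r (Finset.mem_Icc.1 hr).1)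
  wlog hlt : a < b generalizing a b
  · exact this b hb a ha hab.symm heq.symm (by omega)
  rw [Finset.mem_Icc] at ha hb
  refine ⟨b - a, by omega, by omega, mul_left_cancel₀ (pow_ne_zero a hw) ?_⟩
  rw [← pow_add, Nat.add_sub_cancel' hlt.le, mul_one, heq]

theorem Complex.exists_eq_exp_of_pow_eq_one {w : ℂ} {d : ℕ} (hd : d ≠ 0) (h : w ^ d = 1) :
    ∃ ν < d, w = exp (2 * Real.pi * I * ν / d) := by
  have : NeZero d := ⟨hd⟩
  obtain ⟨ν, hν, rfl⟩ := (isPrimitiveRoot_exp d hd).eq_pow_of_pow_eq_one h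
  refine ⟨ν, hν, ?_⟩
  rw [← exp_nat_mul]
  ring_nf

/-- If `p` is a complex polynomial of degree at most `k` with `p 0 ≠ 0` such that
`p (e^z) = 0` implies `p (e^{r z}) = 0` for every positive integer `r`, then every
root of `p` is of the form `exp (2πiν/j)` with `1 ≤ j ≤ k` and `0 ≤ ν < j`. -/
theorem roots_are_roots_of_unity (k : ℕ) (p : Polynomial ℂ)
    (hdeg : p.natDegree ≤ k) (h0 : p.coeff 0 ≠ 0)
    (hclosed : ∀ z : ℂ, ∀ r : ℕ, 1 ≤ r → p.eval (Complex.exp z) = 0 →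
      p.eval (Complex.exp ((r : ℂ) * z)) = 0) :
    ∀ w : ℂ, p.eval w = 0 →
      ∃ j ν : ℕ, 1 ≤ j ∧ j ≤ k ∧ ν < j ∧
        w = Complex.exp (2 * Real.pi * Complex.I * ν / j) := by
  intro w hw
  have hp : p ≠ 0 := by rintro rfl; exact h0 (coeff_zero 0)
  have hw0 : w ≠ 0 := by rintro rfl; exact h0 (by rwa [coeff_zero_eq_eval_zero])
  have hpow : ∀ r, 1 ≤ r → w ^ r ∈ p.roots.toFinset := fun r hr => by
    have := hclosed (Complex.log w) r hr (by rwa [Complex.exp_log hw0])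
    rw [Complex.exp_nat_mul, Complex.exp_log hw0] at this
    simpa [hp] using this
  have hcard : p.roots.toFinset.card ≤ k :=
    p.roots.toFinset_card_le.trans (p.card_roots'.trans hdeg)
  obtain ⟨d, hd1, hdS, hwd⟩ := exists_pow_eq_one_of_forall_pow_mem hw0 hpow
  obtain ⟨ν, hν, rfl⟩ := Complex.exists_eq_exp_of_pow_eq_one (by omega) hwd
  exact ⟨d, ν, hd1, hdS.trans hcard, hν, rfl⟩
end

section
/- Let φ be a compactly supported distribution on ℝ that is not identically zero. Then there exists a nonnegative integer j such that φ applied to the monomial x ↦ x^j is nonzero. -/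
open scoped Topology
open MeasureTheory

noncomputable section

/-- The space of infinitely differentiable functions `ℝ → ℝ`, as a submodule of `ℝ → ℝ`. -/
def SmoothR : Submodule ℝ (ℝ → ℝ) where
  carrier := {f | ContDiff ℝ (⊤ : ℕ∞) f}
  add_mem' {f g} hf hg := by exact ContDiff.add (Set.mem_setOf_eq ▸ hf) (Set.mem_setOf_eq ▸ hg)
  zero_mem' := by exact (contDiff_const : ContDiff ℝ (⊤ : ℕ∞) fun _ : ℝ => (0:ℝ))
  smul_mem' c f hf := by
    have hf' : ContDiff ℝ (⊤ : ℕ∞) f := hf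
    show ContDiff ℝ (⊤ : ℕ∞) (c • f)
    exact hf'.const_smul c

/-- Distributions: linear functionals on smooth functions. -/
abbrev DistR := SmoothR →ₗ[ℝ] ℝ

/-- A distribution vanishes on an open set `U` if it kills every smooth function
supported in `U`. -/
def VanishesOn (T : DistR) (U : Set ℝ) : Prop :=
  ∀ f : SmoothR, tsupport (f : ℝ → ℝ) ⊆ U → T f = 0

/-- The support of a distribution: complement of the largest open set on which it vanishes. -/
def distSupp (T : DistR) : Set ℝ :=
  {x : ℝ | ¬ ∃ U : Set ℝ, IsOpen U ∧ x ∈ U ∧ VanishesOn T U}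

/-- The continuity/compact support estimate characterizing members of `𝓔'(ℝ)`:
a compactly supported distribution of finite order. -/
def IsCompactDist (T : DistR) : Prop :=
  ∃ (K : Set ℝ) (C : ℝ) (N : ℕ), IsCompact K ∧
    ∀ f : SmoothR, |T f| ≤ C * ⨆ (j : Fin (N + 1)) (x : K), |iteratedDeriv j (f : ℝ → ℝ) x|

/-- The monomial `x ↦ x ^ j` as a smooth function. -/
lemma mem_smoothR {f : ℝ → ℝ} : f ∈ SmoothR ↔ ContDiff ℝ (⊤ : ℕ∞) f := Iff.rfl

def monomialS (j : ℕ) : SmoothR := ⟨fun x => x ^ j, mem_smoothR.mpr (contDiff_id.pow j)⟩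

def derivSmooth (f : SmoothR) : SmoothR :=
  ⟨deriv (f : ℝ → ℝ), mem_smoothR.mpr (contDiff_infty_iff_deriv.mp (mem_smoothR.mp f.2)).2⟩

/-- Differentiation as a linear map on smooth functions. -/
def derivLM : SmoothR →ₗ[ℝ] SmoothR where
  toFun := derivSmooth
  map_add' f g := Subtype.ext (by
    funext x
    exact deriv_add (((mem_smoothR.mp f.2).differentiable (by simp)).differentiableAt)
      (((mem_smoothR.mp g.2).differentiable (by simp)).differentiableAt))
  map_smul' c f := Subtype.ext (by
    funext x
    exact deriv_const_smul c (((mem_smoothR.mp f.2).differentiable (by simp)).differentiableAt))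

/-- Distributional derivative: `(D T) f = -T f'`. -/
def Dop (T : DistR) : DistR := -(T ∘ₗ derivLM)

/-- Iterated distributional derivative. -/
def Dpow (m : ℕ) : DistR → DistR := Dop^[m]

/-- Precomposition of a smooth function with the affine map `x ↦ (x + h) / l`. -/
def affineMapS (l h : ℝ) (f : SmoothR) : SmoothR :=
  ⟨fun x => (f : ℝ → ℝ) ((x + h) / l),
    mem_smoothR.mpr ((mem_smoothR.mp f.2).comp ((contDiff_id.add contDiff_const).div_const l))⟩

def compAffine (l h : ℝ) : SmoothR →ₗ[ℝ] SmoothR where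
  toFun := affineMapS l h
  map_add' f g := Subtype.ext rfl
  map_smul' c f := Subtype.ext rfl

/-- The affine pullback `φ(l·−h)` of a distribution `φ`, acting by
`⟨φ(l·−h), f⟩ = |l|⁻¹ ⟨φ, f((·+h)/l)⟩`. -/
def affinePullD (l h : ℝ) (T : DistR) : DistR := |l|⁻¹ • (T ∘ₗ compAffine l h)

/-- The Dirac distribution at a point. -/
def diracD (a : ℝ) : DistR where
  toFun f := (f : ℝ → ℝ) a
  map_add' f g := rfl
  map_smul' c f := rfl

/-!
The finite-order estimate bounds `|φ f|` by the `C^N` norm of `f` on an interval `[a, b]`,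
and polynomials are dense for that norm: approximate `f^(N)` uniformly (Weierstrass) and
integrate `N` times, fixing each constant of integration at `a`, so that every integration
costs at most a factor `b - a` (mean value theorem). Since `φ` kills all polynomials,
`|φ f|` is then arbitrarily small.
-/

open Polynomial Set

theorem Polynomial.exists_derivative_eq {K : Type*} [Field K] [CharZero K] (q : K[X]) :
    ∃ p : K[X], derivative p = q := by
  induction q using Polynomial.induction_on' with
  | add q r hq hr =>
    obtain ⟨p, rfl⟩ := hq
    obtain ⟨p', rfl⟩ := hr
    exact ⟨p + p', derivative_add⟩
  | monomial n a =>
    refine ⟨monomial (n + 1) (a / (n + 1)), ?_⟩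
    rw [derivative_monomial, Nat.add_sub_cancel]
    congr 1
    push_cast
    field_simp

theorem exists_polynomial_near_iteratedDeriv (a b : ℝ) (N : ℕ) (f : ℝ → ℝ) (hf : ContDiff ℝ N f)
    (ε : ℝ) (hε : 0 < ε) :
    ∃ p : ℝ[X], ∀ j ≤ N, ∀ x ∈ Icc a b, |iteratedDeriv j (fun y => f y - p.eval y) x| < ε := by
  induction N generalizing f ε with
  | zero =>
    obtain ⟨p, hp⟩ := exists_polynomial_near_of_continuousOn a b f hf.continuous.continuousOn ε hε
    refine ⟨p, fun j hj x hx => ?_⟩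
    rw [Nat.le_zero.mp hj, iteratedDeriv_zero, abs_sub_comm]
    exact hp x hx
  | succ N ih =>
    push_cast at hf
    obtain ⟨hf_diff, -, hf'⟩ := contDiff_succ_iff_deriv.mp hf
    set ε' := ε / (|b - a| + 1) with hε'
    have hε'_pos : 0 < ε' := by positivity
    obtain ⟨q, hq⟩ := ih (deriv f) hf' ε' hε'_pos
    obtain ⟨p₀, hp₀⟩ := q.exists_derivative_eq
    set p := p₀ + C (f a - p₀.eval a)
    have h_deriv : deriv (fun y => f y - p.eval y) = fun y => deriv f y - q.eval y := by
      funext y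
      rw [deriv_fun_sub (hf_diff y) p.differentiableAt, Polynomial.deriv, derivative_add,
        derivative_C, add_zero, hp₀]
    refine ⟨p, fun j hj x hx => ?_⟩
    rcases j with _ | j
    · have h_at_a : f a - p.eval a = 0 := by simp [p]
      have ha : a ∈ Icc a b := left_mem_Icc.mpr (hx.1.trans hx.2)
      have hmvt := (convex_Icc a b).norm_image_sub_le_of_norm_deriv_le
        (f := fun y => f y - p.eval y) (C := ε') (fun y _ => (hf_diff y).sub p.differentiableAt)
        (fun y hy => by rw [h_deriv]; exact (hq 0 (Nat.zero_le _) y hy).le) ha hx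
      simp only [h_at_a, sub_zero, Real.norm_eq_abs] at hmvt
      rw [iteratedDeriv_zero]
      calc |f x - p.eval x| ≤ ε' * |x - a| := hmvt
        _ ≤ ε' * |b - a| := by gcongr; exacts [sub_nonneg.mpr hx.1, hx.2]
        _ < ε' * (|b - a| + 1) := by gcongr; linarith
        _ = ε := by rw [hε']; field_simp
    · rw [iteratedDeriv_succ', h_deriv]
      calc _ < ε' := hq j (by omega) x hx
        _ ≤ ε := div_le_self hε.le (by linarith [abs_nonneg (b - a)])

def polynomialS (p : ℝ[X]) : SmoothR :=
  ⟨fun x => p.eval x, mem_smoothR.mpr (p.contDiff_aeval _)⟩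

theorem map_polynomialS_eq_zero {φ : DistR} (hφ : ∀ j, φ (monomialS j) = 0) (p : ℝ[X]) :
    φ (polynomialS p) = 0 := by
  induction p using Polynomial.induction_on' with
  | add p q hp hq =>
    have : polynomialS (p + q) = polynomialS p + polynomialS q :=
      Subtype.ext (funext fun x => eval_add)
    rw [this, map_add, hp, hq, add_zero]
  | monomial n a =>
    have : polynomialS (monomial n a) = a • monomialS n :=
      Subtype.ext (funext fun x => eval_monomial)
    rw [this, map_smul, hφ, smul_zero]

theorem IsCompactDist.exists_bound_Icc {φ : DistR} (hφ : IsCompactDist φ) :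
    ∃ (a b C : ℝ) (N : ℕ), 0 < C ∧ ∀ (f : SmoothR) (ε : ℝ), 0 ≤ ε →
      (∀ j ≤ N, ∀ x ∈ Icc a b, |iteratedDeriv j (f : ℝ → ℝ) x| ≤ ε) → |φ f| ≤ C * ε := by
  obtain ⟨K, C, N, hK, hφK⟩ := hφ
  obtain ⟨a, ha⟩ := hK.bddBelow
  obtain ⟨b, hb⟩ := hK.bddAbove
  refine ⟨a, b, |C| + 1, N, by positivity, fun f ε hε hf => ?_⟩
  have h_sup : ⨆ (j : Fin (N + 1)) (x : K), |iteratedDeriv j (f : ℝ → ℝ) x| ≤ ε :=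
    Real.iSup_le (fun j => Real.iSup_le (fun x => hf j (Nat.lt_succ_iff.mp j.2) x
      ⟨ha x.2, hb x.2⟩) hε) hε
  have h_sup_nonneg : 0 ≤ ⨆ (j : Fin (N + 1)) (x : K), |iteratedDeriv j (f : ℝ → ℝ) x| :=
    Real.iSup_nonneg fun j => Real.iSup_nonneg fun x => abs_nonneg _
  calc |φ f| ≤ C * ⨆ (j : Fin (N + 1)) (x : K), |iteratedDeriv j (f : ℝ → ℝ) x| := hφK f
    _ ≤ (|C| + 1) * ε := by
      gcongr
      linarith [le_abs_self C]

theorem IsCompactDist.eq_zero_of_forall_moment_eq_zero {φ : DistR} (hφc : IsCompactDist φ)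
    (hφ : ∀ j, φ (monomialS j) = 0) : φ = 0 := by
  obtain ⟨a, b, C, N, hC, hbound⟩ := hφc.exists_bound_Icc
  ext f
  refine abs_nonpos_iff.mp (le_of_forall_pos_le_add fun ε hε => ?_)
  obtain ⟨p, hp⟩ := exists_polynomial_near_iteratedDeriv a b N f
    ((mem_smoothR.mp f.2).of_le (by exact_mod_cast le_top)) (ε / C) (by positivity)
  have h_approx := hbound (f - polynomialS p) (ε / C) (by positivity)
    fun j hj x hx => (hp j hj x hx).le
  rw [map_sub, map_polynomialS_eq_zero hφ, sub_zero, mul_div_cancel₀ _ hC.ne'] at h_approx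
  rwa [zero_add]

/-- A compactly supported distribution on `ℝ` that is not identically zero has some
nonzero moment: there is `j ≥ 0` with `φ(x ↦ x^j) ≠ 0`. -/
theorem exists_moment_ne_zero (φ : DistR) (hφc : IsCompactDist φ) (hφ : φ ≠ 0) :
    ∃ j : ℕ, φ (monomialS j) ≠ 0 := by
  by_contra! h
  exact hφ (hφc.eq_zero_of_forall_moment_eq_zero h)
end
end

section
/- Let m ≥ 1 be an integer and let φ be a compactly supported distribution on ℝ satisfying moment conditions of order m, i.e., φ(x ↦ x^j) = 0 for all 0 ≤ j ≤ m−1. Then there exists a unique compactly supported distribution ψ such that φ equals the m-th distributional derivative of ψ. Moreover, if φ(x ↦ x^m) ≠ 0, then ψ applied to the constant function 1 is nonzero. -/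
open scoped Topology
open MeasureTheory

noncomputable section

/-!
`D^m` is surjective on smooth functions, with the `m`-fold antiderivative `A^m` based at `0` as a
right inverse, and its kernel consists of the polynomials of degree `< m`, which `φ` annihilates.
Hence `Dpow m ψ = φ`, i.e. `ψ ∘ D^m = (-1)^m φ`, has the unique solution `ψ = (-1)^m φ ∘ A^m`.
This `ψ` is compactly supported: on a ball `[-r, r]` containing the support of `φ`, the
derivatives of `A^m f` of order `≤ m` are bounded by `r^(m-j) sup |f|` and the higher ones are
derivatives of `f`. Finally `ψ(1) = ψ(D^m (x^m / m!)) = (-1)^m φ(x^m) / m!`.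
-/

section Derivative

lemma coe_derivLM_pow (j : ℕ) (f : SmoothR) :
    ((derivLM ^ j) f : ℝ → ℝ) = iteratedDeriv j f := by
  induction j generalizing f with
  | zero => rfl
  | succ n ih => rw [pow_succ, Module.End.mul_apply, ih, iteratedDeriv_succ']; rfl

lemma derivLM_monomialS_succ (j : ℕ) :
    derivLM (monomialS (j + 1)) = ((j : ℝ) + 1) • monomialS j := by
  refine Subtype.ext (funext fun x => ?_)
  change deriv (fun x : ℝ => x ^ (j + 1)) x = ((j : ℝ) + 1) * x ^ j
  simp

lemma derivLM_pow_monomialS (m : ℕ) :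
    (derivLM ^ m) (monomialS m) = (m.factorial : ℝ) • monomialS 0 := by
  induction m with
  | zero => simp
  | succ n ih =>
    rw [pow_succ, Module.End.mul_apply, derivLM_monomialS_succ, map_smul, ih, smul_smul,
      Nat.factorial_succ]
    push_cast
    ring_nf

lemma ker_derivLM_le_span : LinearMap.ker derivLM ≤ Submodule.span ℝ {monomialS 0} := by
  intro f hf
  have hf' : ∀ x, deriv (f : ℝ → ℝ) x = 0 := fun x => congrFun (congrArg Subtype.val hf) x
  refine Submodule.mem_span_singleton.mpr ⟨(f : ℝ → ℝ) 0, Subtype.ext (funext fun x => ?_)⟩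
  change (f : ℝ → ℝ) 0 * x ^ 0 = (f : ℝ → ℝ) x
  rw [pow_zero, mul_one,
    is_const_of_deriv_eq_zero ((mem_smoothR.mp f.2).differentiable (by simp)) hf' x 0]

lemma ker_derivLM_pow_le_span (m : ℕ) :
    LinearMap.ker (derivLM ^ m) ≤ Submodule.span ℝ (monomialS '' Set.Iio m) := by
  induction m with
  | zero =>
    intro f hf
    rw [LinearMap.mem_ker, pow_zero, Module.End.one_apply] at hf
    rw [hf]
    exact zero_mem _
  | succ m ih =>
    intro f hf
    rw [LinearMap.mem_ker, pow_succ, Module.End.mul_apply] at hf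
    have hspan : Submodule.span ℝ (monomialS '' Set.Iio m)
        ≤ (Submodule.span ℝ (monomialS '' Set.Iio (m + 1))).map derivLM := by
      refine Submodule.span_le.mpr ?_
      rintro _ ⟨j, hj, rfl⟩
      refine ⟨((j : ℝ) + 1)⁻¹ • monomialS (j + 1), ?_, ?_⟩
      · exact Submodule.smul_mem _ _ (Submodule.subset_span ⟨j + 1, by simpa using hj, rfl⟩)
      · rw [map_smul, derivLM_monomialS_succ, smul_smul, inv_mul_cancel₀ (by positivity),
          one_smul]
    obtain ⟨g, hg, hfg⟩ := hspan (ih hf)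
    have hconst : f - g ∈ Submodule.span ℝ (monomialS '' Set.Iio (m + 1)) := by
      refine Submodule.span_mono ?_ (ker_derivLM_le_span (by simp [hfg]))
      exact Set.singleton_subset_iff.mpr ⟨0, by simp, rfl⟩
    simpa using add_mem hconst hg

end Derivative

section Antiderivative

lemma contDiff_integral_zero {g : ℝ → ℝ} (hg : ContDiff ℝ (⊤ : ℕ∞) g) :
    ContDiff ℝ (⊤ : ℕ∞) (fun x => ∫ t in 0..x, g t) := by
  have hderiv : deriv (fun x => ∫ t in 0..x, g t) = g :=
    funext (hg.continuous.deriv_integral g 0)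
  refine contDiff_infty_iff_deriv.mpr ⟨fun x => ?_, by rw [hderiv]; exact hg⟩
  exact (hg.continuous.integral_hasStrictDerivAt 0 x).hasDerivAt.differentiableAt

def antiderivLM : SmoothR →ₗ[ℝ] SmoothR where
  toFun f := ⟨fun x => ∫ t in 0..x, (f : ℝ → ℝ) t, contDiff_integral_zero (mem_smoothR.mp f.2)⟩
  map_add' f g := Subtype.ext (funext fun x =>
    intervalIntegral.integral_add ((mem_smoothR.mp f.2).continuous.intervalIntegrable 0 x)
      ((mem_smoothR.mp g.2).continuous.intervalIntegrable 0 x))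
  map_smul' c f := Subtype.ext (funext fun _ =>
    intervalIntegral.integral_const_mul c (f : ℝ → ℝ))

lemma antiderivLM_apply (f : SmoothR) (x : ℝ) :
    (antiderivLM f : ℝ → ℝ) x = ∫ t in 0..x, (f : ℝ → ℝ) t := rfl

lemma derivLM_mul_antiderivLM : derivLM * antiderivLM = 1 :=
  LinearMap.ext fun f => Subtype.ext <|
    funext ((mem_smoothR.mp f.2).continuous.deriv_integral (f : ℝ → ℝ) 0)

lemma derivLM_pow_mul_antiderivLM_pow (k : ℕ) : derivLM ^ k * antiderivLM ^ k = 1 :=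
  pow_mul_pow_eq_one k derivLM_mul_antiderivLM

lemma abs_antiderivLM_pow_apply_le (f : SmoothR) (k : ℕ) {r B : ℝ}
    (hB : ∀ y, |y| ≤ r → |(f : ℝ → ℝ) y| ≤ B) {x : ℝ} (hx : |x| ≤ r) :
    |((antiderivLM ^ k) f : ℝ → ℝ) x| ≤ r ^ k * B := by
  induction k generalizing x with
  | zero => simpa using hB x hx
  | succ k ih =>
    have hr : 0 ≤ r := (abs_nonneg x).trans hx
    have hB0 : 0 ≤ r ^ k * B :=
      mul_nonneg (pow_nonneg hr k) ((abs_nonneg _).trans (hB 0 (by simpa using hr)))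
    rw [pow_succ', Module.End.mul_apply, antiderivLM_apply, ← Real.norm_eq_abs]
    calc ‖∫ t in 0..x, ((antiderivLM ^ k) f : ℝ → ℝ) t‖
        ≤ r ^ k * B * |x - 0| := by
          refine intervalIntegral.norm_integral_le_of_norm_le_const fun t ht => ih ?_
          have htx : |t - 0| ≤ |x - 0| := Set.abs_sub_left_of_mem_uIcc (Set.uIoc_subset_uIcc ht)
          simpa using htx.trans (by simpa using hx)
      _ ≤ r ^ k * B * r := by rw [sub_zero]; exact mul_le_mul_of_nonneg_left hx hB0
      _ = r ^ (k + 1) * B := by ring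

end Antiderivative

section CompactDist

/-- `IsCompactDist T` unfolds to
`∃ K C N, IsCompact K ∧ ∀ f, |T f| ≤ C * iteratedDerivSup K N f`. -/
def iteratedDerivSup (K : Set ℝ) (N : ℕ) (f : ℝ → ℝ) : ℝ :=
  ⨆ (j : Fin (N + 1)) (x : K), |iteratedDeriv j f x|

lemma iteratedDerivSup_nonneg (K : Set ℝ) (N : ℕ) (f : ℝ → ℝ) : 0 ≤ iteratedDerivSup K N f :=
  Real.iSup_nonneg fun _ => Real.iSup_nonneg fun _ => abs_nonneg _

lemma abs_iteratedDeriv_le_iteratedDerivSup {K : Set ℝ} (hK : IsCompact K) {f : ℝ → ℝ}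
    (hf : ContDiff ℝ (⊤ : ℕ∞) f) {N j : ℕ} (hj : j ≤ N) {x : ℝ} (hx : x ∈ K) :
    |iteratedDeriv j f x| ≤ iteratedDerivSup K N f := by
  have : CompactSpace K := isCompact_iff_compactSpace.mp hK
  have hcont : Continuous fun y : K => |iteratedDeriv j f y| :=
    ((hf.continuous_iteratedDeriv j (mod_cast le_top)).comp continuous_subtype_val).abs
  refine le_ciSup_of_le (Set.finite_range _).bddAbove ⟨j, Nat.lt_succ_of_le hj⟩ ?_
  exact le_ciSup (isCompact_range hcont).bddAbove (⟨x, hx⟩ : K)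

lemma iteratedDerivSup_le {K : Set ℝ} {N : ℕ} {f : ℝ → ℝ} {B : ℝ} (hB : 0 ≤ B)
    (h : ∀ j ≤ N, ∀ x ∈ K, |iteratedDeriv j f x| ≤ B) : iteratedDerivSup K N f ≤ B :=
  Real.iSup_le (fun j => Real.iSup_le (fun x => h j (Nat.le_of_lt_succ j.2) x x.2) hB) hB

lemma abs_iteratedDeriv_antiderivLM_pow_le (f : SmoothR) (k : ℕ) {N j : ℕ} (hj : j ≤ N)
    {r x : ℝ} (hx : |x| ≤ r) :
    |iteratedDeriv j ((antiderivLM ^ k) f : ℝ → ℝ) x|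
      ≤ max 1 r ^ k * iteratedDerivSup (Metric.closedBall 0 r) N f := by
  set S := iteratedDerivSup (Metric.closedBall 0 r) N f
  have hf := mem_smoothR.mp f.2
  have hball : ∀ y : ℝ, |y| ≤ r → y ∈ Metric.closedBall 0 r := by simp
  rw [← coe_derivLM_pow]
  rcases le_or_gt j k with hjk | hkj
  · obtain ⟨i, rfl⟩ := Nat.exists_eq_add_of_le hjk
    rw [pow_add, ← Module.End.mul_apply, ← mul_assoc, derivLM_pow_mul_antiderivLM_pow, one_mul]
    have hB : ∀ y, |y| ≤ r → |(f : ℝ → ℝ) y| ≤ S := fun y hy => by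
      simpa using abs_iteratedDeriv_le_iteratedDerivSup (isCompact_closedBall 0 r) hf
        (Nat.zero_le N) (hball y hy)
    have hr : r ^ i ≤ max 1 r ^ (j + i) :=
      (pow_le_pow_left₀ ((abs_nonneg x).trans hx) (le_max_right 1 r) i).trans
        (pow_le_pow_right₀ (le_max_left 1 r) (Nat.le_add_left i j))
    exact (abs_antiderivLM_pow_apply_le f i hB hx).trans
      (mul_le_mul_of_nonneg_right hr (iteratedDerivSup_nonneg _ _ _))
  · obtain ⟨i, rfl⟩ := Nat.exists_eq_add_of_lt hkj
    rw [show k + i + 1 = (i + 1) + k by ring, pow_add, ← Module.End.mul_apply, mul_assoc,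
      derivLM_pow_mul_antiderivLM_pow, mul_one, coe_derivLM_pow]
    exact (abs_iteratedDeriv_le_iteratedDerivSup (isCompact_closedBall 0 r) hf (by omega)
      (hball x hx)).trans
      (le_mul_of_one_le_left (iteratedDerivSup_nonneg _ _ _) (one_le_pow₀ (le_max_left 1 r)))

lemma IsCompactDist.smul {T : DistR} (hT : IsCompactDist T) (c : ℝ) : IsCompactDist (c • T) := by
  obtain ⟨K, C, N, hK, hbound⟩ := hT
  refine ⟨K, |c| * C, N, hK, fun f => ?_⟩
  rw [LinearMap.smul_apply, smul_eq_mul, abs_mul, mul_assoc]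
  exact mul_le_mul_of_nonneg_left (hbound f) (abs_nonneg c)

lemma IsCompactDist.comp_antiderivLM_pow {T : DistR} (hT : IsCompactDist T) (k : ℕ) :
    IsCompactDist (T ∘ₗ antiderivLM ^ k) := by
  obtain ⟨K, C, N, hK, hbound⟩ := hT
  obtain ⟨r, hKr⟩ := hK.isBounded.subset_closedBall 0
  refine ⟨Metric.closedBall 0 r, max C 0 * max 1 r ^ k, N, isCompact_closedBall 0 r,
    fun f => ?_⟩
  have hsup : iteratedDerivSup K N ((antiderivLM ^ k) f)
      ≤ max 1 r ^ k * iteratedDerivSup (Metric.closedBall 0 r) N f := by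
    refine iteratedDerivSup_le (mul_nonneg (by positivity) (iteratedDerivSup_nonneg _ _ _))
      fun j hj x hx => abs_iteratedDeriv_antiderivLM_pow_le f k hj ?_
    simpa using hKr hx
  calc |T ((antiderivLM ^ k) f)| ≤ C * iteratedDerivSup K N ((antiderivLM ^ k) f) := hbound _
    _ ≤ max C 0 * iteratedDerivSup K N ((antiderivLM ^ k) f) :=
      mul_le_mul_of_nonneg_right (le_max_left C 0) (iteratedDerivSup_nonneg _ _ _)
    _ ≤ max C 0 * (max 1 r ^ k * iteratedDerivSup (Metric.closedBall 0 r) N f) :=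
      mul_le_mul_of_nonneg_left hsup (le_max_right C 0)
    _ = max C 0 * max 1 r ^ k * iteratedDerivSup (Metric.closedBall 0 r) N f := by ring

end CompactDist

section Dpow

lemma Dpow_eq (m : ℕ) (T : DistR) : Dpow m T = (-1 : ℝ) ^ m • (T ∘ₗ derivLM ^ m) := by
  induction m generalizing T with
  | zero => ext f; simp [Dpow]
  | succ n ih =>
    rw [Dpow, Function.iterate_succ_apply, ← Dpow, ih, Dop, pow_succ', pow_succ',
      Module.End.mul_eq_comp, LinearMap.neg_comp, LinearMap.comp_assoc, neg_one_mul, smul_neg]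
    exact (neg_smul _ _).symm

lemma apply_derivLM_pow_of_Dpow_eq {m : ℕ} {ψ φ : DistR} (h : Dpow m ψ = φ) (f : SmoothR) :
    ψ ((derivLM ^ m) f) = (-1 : ℝ) ^ m * φ f := by
  rw [← h, Dpow_eq, LinearMap.smul_apply, LinearMap.comp_apply, smul_eq_mul, ← mul_assoc,
    ← mul_pow, neg_one_mul, neg_neg, one_pow, one_mul]

lemma Dpow_eq_iff {m : ℕ} {φ ψ : DistR}
    (hφ : LinearMap.ker (derivLM ^ m) ≤ LinearMap.ker φ) :
    Dpow m ψ = φ ↔ ψ = (-1 : ℝ) ^ m • (φ ∘ₗ antiderivLM ^ m) := by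
  have hinv : ∀ g, (derivLM ^ m) ((antiderivLM ^ m) g) = g := fun g => by
    rw [← Module.End.mul_apply, derivLM_pow_mul_antiderivLM_pow, Module.End.one_apply]
  constructor
  · intro h
    ext g
    rw [LinearMap.smul_apply, LinearMap.comp_apply, smul_eq_mul,
      ← apply_derivLM_pow_of_Dpow_eq h, hinv]
  · rintro rfl
    ext f
    have hker : (antiderivLM ^ m) ((derivLM ^ m) f) - f ∈ LinearMap.ker φ :=
      hφ (by rw [LinearMap.mem_ker, map_sub, hinv, sub_self])
    rw [LinearMap.mem_ker, map_sub, sub_eq_zero] at hker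
    rw [Dpow_eq]
    simp only [LinearMap.smul_apply, LinearMap.comp_apply, smul_eq_mul, hker]
    rw [← mul_assoc, ← mul_pow, neg_one_mul, neg_neg, one_pow, one_mul]

end Dpow

theorem antiderivative_exists_unique_general (m : ℕ) (φ : DistR)
    (hφc : IsCompactDist φ) (hmom : ∀ j : ℕ, j < m → φ (monomialS j) = 0) :
    (∃! ψ : DistR, IsCompactDist ψ ∧ Dpow m ψ = φ) ∧
    (φ (monomialS m) ≠ 0 →
      ∀ ψ : DistR, IsCompactDist ψ → Dpow m ψ = φ → ψ (monomialS 0) ≠ 0) := by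
  have hker : LinearMap.ker (derivLM ^ m) ≤ LinearMap.ker φ := by
    refine (ker_derivLM_pow_le_span m).trans (Submodule.span_le.mpr ?_)
    rintro _ ⟨j, hj, rfl⟩
    exact hmom j hj
  refine ⟨⟨_, ⟨(hφc.comp_antiderivLM_pow m).smul _, (Dpow_eq_iff hker).mpr rfl⟩,
    fun ψ hψ => (Dpow_eq_iff hker).mp hψ.2⟩, fun hφm ψ _ hψ => ?_⟩
  have hfac : (m.factorial : ℝ) ≠ 0 := Nat.cast_ne_zero.mpr m.factorial_ne_zero
  have hone : (derivLM ^ m) ((m.factorial : ℝ)⁻¹ • monomialS m) = monomialS 0 := by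
    rw [map_smul, derivLM_pow_monomialS, smul_smul, inv_mul_cancel₀ hfac, one_smul]
  rw [← hone, apply_derivLM_pow_of_Dpow_eq hψ, map_smul, smul_eq_mul]
  exact mul_ne_zero (pow_ne_zero _ (by norm_num)) (mul_ne_zero (inv_ne_zero hfac) hφm)

/-- If `φ` is a compactly supported distribution satisfying moment conditions of order
`m ≥ 1`, there is a unique compactly supported distribution `ψ` with `D^m ψ = φ`;
moreover if `φ(x ↦ x^m) ≠ 0` then `ψ(1) ≠ 0`. -/
theorem antiderivative_exists_unique (m : ℕ) (hm : 1 ≤ m) (φ : DistR)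
    (hφc : IsCompactDist φ) (hmom : ∀ j : ℕ, j < m → φ (monomialS j) = 0) :
    (∃! ψ : DistR, IsCompactDist ψ ∧ Dpow m ψ = φ) ∧
    (φ (monomialS m) ≠ 0 →
      ∀ ψ : DistR, IsCompactDist ψ → Dpow m ψ = φ → ψ (monomialS 0) ≠ 0) :=
  antiderivative_exists_unique_general m φ hφc hmom

end
end

section
/- If φ is a totally refinable compactly supported distribution on ℝ satisfying moment conditions of order m ≥ 1, then its m-th antiderivative D^{−m}φ is also totally refinable. -/
/-!
Differentiation is surjective on smooth functions (take an integral), so the distributional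
derivative `D` is injective. The chain rule gives `D^m (T(p·−j)) = p^m • (D^m T)(p·−j)`; applying
`D^m` to `Σ_j p^{-m} c_j ψ(p·−j)` therefore yields `Σ_j c_j φ(p·−j) = φ = D^m ψ`, and injectivity
of `D^m` turns this into a refinement equation for `ψ`.
-/

open scoped Topology
open MeasureTheory

noncomputable section

/-- `φ` is `p`-refinable: `φ = Σ_j c_j φ(p·−j)` for finitely many coefficients. -/
def IsRefinable (p : ℕ) (φ : DistR) : Prop :=
  ∃ (s : Finset ℤ) (c : ℤ → ℝ), φ = ∑ j ∈ s, c j • affinePullD (p : ℝ) (j : ℝ) φ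

/-- `φ` is totally refinable: it is nonzero and `p`-refinable for every integer `p ≥ 2`. -/
def TotallyRefinable (φ : DistR) : Prop :=
  φ ≠ 0 ∧ ∀ p : ℕ, 2 ≤ p → IsRefinable p φ

lemma derivLM_surjective : Function.Surjective derivLM := by
  intro g
  have hg : ContDiff ℝ (⊤ : ℕ∞) (g : ℝ → ℝ) := mem_smoothR.mp g.2
  set F : ℝ → ℝ := fun u => ∫ t in (0 : ℝ)..u, (g : ℝ → ℝ) t
  have hF : ∀ x, HasDerivAt F ((g : ℝ → ℝ) x) x := fun x =>
    (hg.continuous.integral_hasStrictDerivAt 0 x).hasDerivAt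
  have hderiv : deriv F = (g : ℝ → ℝ) := funext fun x => (hF x).deriv
  have hFsmooth : ContDiff ℝ (⊤ : ℕ∞) F :=
    contDiff_infty_iff_deriv.mpr ⟨fun x => (hF x).differentiableAt, hderiv ▸ hg⟩
  exact ⟨⟨F, mem_smoothR.mpr hFsmooth⟩, Subtype.ext hderiv⟩

lemma dop_injective : Function.Injective Dop := by
  intro T S h
  have hcomp : T ∘ₗ derivLM = S ∘ₗ derivLM := neg_injective h
  exact (LinearMap.cancel_right derivLM_surjective).mp hcomp

lemma dpow_injective (m : ℕ) : Function.Injective (Dpow m) :=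
  dop_injective.iterate m

def dopLinear : DistR →ₗ[ℝ] DistR where
  toFun := Dop
  map_add' T S := by
    simp only [Dop, LinearMap.add_comp, neg_add]
  map_smul' c T := by
    simp only [Dop, LinearMap.smul_comp, RingHom.id_apply, smul_neg]

lemma dop_smul (c : ℝ) (T : DistR) : Dop (c • T) = c • Dop T :=
  dopLinear.map_smul c T

lemma dpow_eq_pow_dopLinear (m : ℕ) : Dpow m = ⇑(dopLinear ^ m) :=
  (Module.End.coe_pow dopLinear m).symm

lemma dpow_zero_right (m : ℕ) : Dpow m 0 = 0 := by
  rw [dpow_eq_pow_dopLinear, map_zero]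

lemma dpow_smul (m : ℕ) (c : ℝ) (T : DistR) : Dpow m (c • T) = c • Dpow m T := by
  rw [dpow_eq_pow_dopLinear, map_smul]

lemma dpow_sum {ι : Type*} (m : ℕ) (s : Finset ι) (T : ι → DistR) :
    Dpow m (∑ i ∈ s, T i) = ∑ i ∈ s, Dpow m (T i) := by
  rw [dpow_eq_pow_dopLinear, map_sum]

lemma derivSmooth_affineMapS (l h : ℝ) (f : SmoothR) :
    derivSmooth (affineMapS l h f) = l⁻¹ • affineMapS l h (derivSmooth f) := by
  apply Subtype.ext
  funext x
  have hf : Differentiable ℝ (f : ℝ → ℝ) := (mem_smoothR.mp f.2).differentiable (by simp)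
  have hinner : HasDerivAt (fun y : ℝ => (y + h) / l) (1 / l) x := by
    simpa using ((hasDerivAt_id x).add_const h).div_const l
  have hcomp : HasDerivAt (fun y => (f : ℝ → ℝ) ((y + h) / l))
      (deriv (f : ℝ → ℝ) ((x + h) / l) * (1 / l)) x :=
    (hf ((x + h) / l)).hasDerivAt.comp x hinner
  show deriv (fun y => (f : ℝ → ℝ) ((y + h) / l)) x = l⁻¹ * deriv (f : ℝ → ℝ) ((x + h) / l)
  rw [hcomp.deriv]
  ring

lemma dop_affinePullD {l : ℝ} (hl : l ≠ 0) (h : ℝ) (T : DistR) :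
    Dop (affinePullD l h T) = l • affinePullD l h (Dop T) := by
  ext f
  have hchain : derivLM (compAffine l h f) = l⁻¹ • compAffine l h (derivLM f) :=
    derivSmooth_affineMapS l h f
  simp only [Dop, affinePullD, LinearMap.neg_apply, LinearMap.smul_apply, LinearMap.comp_apply,
    hchain, map_smul, smul_eq_mul]
  field_simp

lemma dpow_affinePullD {l : ℝ} (hl : l ≠ 0) (h : ℝ) (m : ℕ) (T : DistR) :
    Dpow m (affinePullD l h T) = l ^ m • affinePullD l h (Dpow m T) := by
  induction m with
  | zero => simp [Dpow]
  | succ n ih =>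
    have hsucc : ∀ S, Dpow (n + 1) S = Dop (Dpow n S) := Function.iterate_succ_apply' Dop n
    rw [hsucc, hsucc, ih, dop_smul, dop_affinePullD hl, smul_smul, pow_succ]

lemma isRefinable_of_isRefinable_dpow {p : ℕ} (hp : p ≠ 0) (m : ℕ) (ψ : DistR)
    (href : IsRefinable p (Dpow m ψ)) : IsRefinable p ψ := by
  obtain ⟨s, c, hc⟩ := href
  have hp' : (p : ℝ) ≠ 0 := Nat.cast_ne_zero.mpr hp
  refine ⟨s, fun j => c j / (p : ℝ) ^ m, dpow_injective m ?_⟩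
  calc Dpow m ψ = ∑ j ∈ s, c j • affinePullD p j (Dpow m ψ) := hc
    _ = ∑ j ∈ s, Dpow m ((c j / (p : ℝ) ^ m) • affinePullD p j ψ) := by
      refine Finset.sum_congr rfl fun j _ => ?_
      rw [dpow_smul, dpow_affinePullD hp', smul_smul, div_mul_cancel₀ _ (pow_ne_zero m hp')]
    _ = Dpow m (∑ j ∈ s, (c j / (p : ℝ) ^ m) • affinePullD p j ψ) := (dpow_sum m _ _).symm

theorem antiderivative_totally_refinable_general (m : ℕ) (φ : DistR)
    (hφt : TotallyRefinable φ)
    (ψ : DistR) (hψ : Dpow m ψ = φ) :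
    TotallyRefinable ψ := by
  obtain ⟨hφ0, hφref⟩ := hφt
  subst hψ
  refine ⟨?_, fun p hp => isRefinable_of_isRefinable_dpow (by omega) m ψ (hφref p hp)⟩
  rintro rfl
  exact hφ0 (dpow_zero_right m)

/-- If `φ` is a totally refinable compactly supported distribution satisfying moment
conditions of order `m ≥ 1`, then its `m`-th antiderivative `D^{-m}φ` is also
totally refinable. -/
theorem antiderivative_totally_refinable (m : ℕ) (hm : 1 ≤ m) (φ : DistR)
    (hφc : IsCompactDist φ) (hφt : TotallyRefinable φ)
    (hmom : ∀ j : ℕ, j < m → φ (monomialS j) = 0)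
    (ψ : DistR) (hψc : IsCompactDist ψ) (hψ : Dpow m ψ = φ) :
    TotallyRefinable ψ :=
  antiderivative_totally_refinable_general m φ hφt ψ hψ

end
end

section
/- Let F : P_k → 𝓔'(ℝ) satisfy conditions (i)–(iv). If F(0,1,…,k) = 0, then F(a_0,…,a_k) = 0 for all (a_0,…,a_k) ∈ P_k. -/
/-!
A strictly increasing integer tuple that is not a window `(m, m + 1, …, m + k)` has an integer
gap strictly inside `[a_0, a_k]`. Inserting it as a knot produces two tuples of smaller width
`a_k - a_0` whose span contains `F a`, so induction on the width reduces vanishing on integer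
tuples to vanishing on windows, which are translates of `(0, 1, …, k)`. A rational tuple is a
positive dilate of an integer one. Translation and dilation only move `F` inside the span of an
affine pullback of a vanishing distribution, hence preserve vanishing.
-/

open scoped Topology
open MeasureTheory

noncomputable section

/-- Condition (i): the support of `F (a_0, …, a_k)` is contained in `[a_0, a_k]`. -/
def SuppCond (k : ℕ) (F : (Fin (k + 1) → ℚ) → DistR) : Prop :=
  ∀ a : Fin (k + 1) → ℚ, StrictMono a →
    distSupp (F a) ⊆ Set.Icc (a 0 : ℝ) (a (Fin.last k) : ℝ)

/-- Condition (ii): inserting one rational knot `q` strictly between `a_0` and `a_k`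
(and distinct from all knots), with `α` the increasing rearrangement of the knots
together with `q`, the distribution `F a` lies in the span of the two refined ones. -/
def SpanCond (k : ℕ) (F : (Fin (k + 1) → ℚ) → DistR) : Prop :=
  ∀ a : Fin (k + 1) → ℚ, StrictMono a → ∀ q : ℚ,
    a 0 < q → q < a (Fin.last k) → q ∉ Set.range a →
    ∀ α : Fin (k + 2) → ℚ, StrictMono α →
      Set.range α = insert q (Set.range a) →
      F a ∈ Submodule.span ℝ {F (Fin.init α), F (Fin.tail α)}

/-- Condition (iii): translation invariance under rational shifts. -/
def TransCond (k : ℕ) (F : (Fin (k + 1) → ℚ) → DistR) : Prop :=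
  ∀ a : Fin (k + 1) → ℚ, StrictMono a → ∀ τ : ℚ,
    F (fun i => a i + τ) ∈ Submodule.span ℝ {affinePullD 1 (τ : ℝ) (F a)}

/-- Condition (iv): dilation invariance under positive rational dilations. -/
def DilCond (k : ℕ) (F : (Fin (k + 1) → ℚ) → DistR) : Prop :=
  ∀ a : Fin (k + 1) → ℚ, StrictMono a → ∀ δ : ℚ, 0 < δ →
    F (fun i => δ * a i) ∈ Submodule.span ℝ {affinePullD ((δ : ℝ))⁻¹ 0 (F a)}

lemma exists_strictMono_range_eq_insert {β : Type*} [LinearOrder β] {n : ℕ} {c : Fin n → β}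
    (hc : StrictMono c) {q : β} (hq : q ∉ Set.range c) :
    ∃ α : Fin (n + 1) → β, StrictMono α ∧ Set.range α = insert q (Set.range c) := by
  classical
  set s := insert q (Finset.univ.image c)
  have hs : s.card = n + 1 := by
    rw [Finset.card_insert_of_notMem (by simpa using hq),
      Finset.card_image_of_injective _ hc.injective, Finset.card_fin]
  exact ⟨s.orderEmbOfFin hs, (s.orderEmbOfFin hs).strictMono, by simp [s]⟩

lemma eq_consecutive_of_forall_mem_range {k : ℕ} {c : Fin (k + 1) → ℤ} (hc : StrictMono c)
    (hfull : ∀ q, c 0 < q → q < c (Fin.last k) → q ∈ Set.range c) :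
    c = fun i : Fin (k + 1) => c 0 + ((i : ℕ) : ℤ) := by
  classical
  have hIcc : Finset.Icc (c 0) (c (Fin.last k)) ⊆ Finset.univ.image c := by
    intro q hq
    obtain ⟨hq0, hqk⟩ := Finset.mem_Icc.mp hq
    obtain rfl | hq0 := hq0.eq_or_lt
    · exact Finset.mem_image_of_mem c (Finset.mem_univ 0)
    obtain rfl | hqk := hqk.eq_or_lt
    · exact Finset.mem_image_of_mem c (Finset.mem_univ _)
    simpa using hfull q hq0 hqk
  have hlen : c (Fin.last k) ≤ c 0 + k := by
    have := Finset.card_le_card hIcc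
    rw [Int.card_Icc, Finset.card_image_of_injective _ hc.injective, Finset.card_univ,
      Fintype.card_fin] at this
    omega
  have hs : (Finset.Icc (c 0) (c 0 + k)).card = k + 1 := by rw [Int.card_Icc]; omega
  have hconsec : StrictMono fun i : Fin (k + 1) => c 0 + ((i : ℕ) : ℤ) := fun i j hij => by
    simpa using hij
  -- both are the increasing enumeration of `Icc (c 0) (c 0 + k)`
  exact (Finset.orderEmbOfFin_unique hs (fun i => Finset.mem_Icc.mpr
      ⟨hc.monotone (Fin.zero_le i), (hc.monotone (Fin.le_last i)).trans hlen⟩) hc).trans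
    (Finset.orderEmbOfFin_unique hs
      (fun i => Finset.mem_Icc.mpr ⟨by simp, by simpa using Fin.is_le i⟩) hconsec).symm

theorem strictMono_induction_on_knots {k : ℕ} {P : (Fin (k + 1) → ℤ) → Prop}
    (window : ∀ m : ℤ, P fun i => m + ((i : ℕ) : ℤ))
    (insert_knot : ∀ c : Fin (k + 1) → ℤ, StrictMono c → ∀ q : ℤ, c 0 < q → q < c (Fin.last k) →
      q ∉ Set.range c → ∀ α : Fin (k + 2) → ℤ, StrictMono α →
      Set.range α = insert q (Set.range c) → P (Fin.init α) → P (Fin.tail α) → P c)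
    (c : Fin (k + 1) → ℤ) (hc : StrictMono c) : P c := by
  induction hn : (c (Fin.last k) - c 0).toNat using Nat.strong_induction_on generalizing c with
  | _ n ih =>
  by_cases hgap : ∃ q, c 0 < q ∧ q < c (Fin.last k) ∧ q ∉ Set.range c
  · obtain ⟨q, hq0, hqk, hqc⟩ := hgap
    obtain ⟨α, hα, hrange⟩ := exists_strictMono_range_eq_insert hc hqc
    have hbounds : ∀ i, c 0 ≤ α i ∧ α i ≤ c (Fin.last k) := by
      intro i
      rcases (hrange ▸ Set.mem_range_self i : α i ∈ insert q (Set.range c)) with h | ⟨j, hj⟩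
      · omega
      · rw [← hj]
        exact ⟨hc.monotone (Fin.zero_le j), hc.monotone (Fin.le_last j)⟩
    have hinit : Fin.init α (Fin.last k) < α (Fin.last (k + 1)) :=
      hα (Fin.castSucc_lt_last _)
    have htail : α 0 < Fin.tail α 0 := hα (Fin.succ_pos _)
    have htail_last : Fin.tail α (Fin.last k) = α (Fin.last (k + 1)) :=
      congrArg α (Fin.succ_last k)
    obtain ⟨hα0, -⟩ := hbounds 0
    obtain ⟨-, hαlast⟩ := hbounds (Fin.last (k + 1))
    exact insert_knot c hc q hq0 hqk hqc α hα hrange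
      (ih _ (by change (Fin.init α (Fin.last k) - α 0).toNat < n; omega) _
        (hα.comp Fin.strictMono_castSucc) rfl)
      (ih _ (by omega) _ (hα.comp Fin.strictMono_succ) rfl)
  · push Not at hgap
    rw [eq_consecutive_of_forall_mem_range hc hgap]
    exact window _

lemma exists_nat_mul_eq_intCast {ι : Type*} [Fintype ι] (a : ι → ℚ) :
    ∃ N : ℕ, 0 < N ∧ ∃ b : ι → ℤ, ∀ i, (b i : ℚ) = N * a i := by
  refine ⟨∏ j, (a j).den, Finset.prod_pos fun j _ => (a j).pos,
    fun i => (a i).num * ((∏ j, (a j).den) / (a i).den : ℕ), fun i => ?_⟩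
  obtain ⟨m, hm⟩ := Finset.dvd_prod_of_mem (fun j => (a j).den) (Finset.mem_univ i)
  dsimp only
  rw [hm, Nat.mul_div_cancel_left _ (a i).pos]
  push_cast
  rw [mul_right_comm, Rat.den_mul_eq_num]

lemma eq_zero_of_mem_span_affinePullD_zero {T : DistR} {l h : ℝ}
    (hT : T ∈ Submodule.span ℝ {affinePullD l h 0}) : T = 0 := by
  simpa [affinePullD] using hT

section Conditions

variable {k : ℕ} {F : (Fin (k + 1) → ℚ) → DistR}

lemma TransCond.add_const_eq_zero (h3 : TransCond k F) {c : Fin (k + 1) → ℚ}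
    (hc : StrictMono c) (hc0 : F c = 0) (τ : ℚ) : F (fun i => c i + τ) = 0 :=
  eq_zero_of_mem_span_affinePullD_zero (hc0 ▸ h3 c hc τ)

lemma DilCond.const_mul_eq_zero (h4 : DilCond k F) {c : Fin (k + 1) → ℚ}
    (hc : StrictMono c) (hc0 : F c = 0) {δ : ℚ} (hδ : 0 < δ) : F (fun i => δ * c i) = 0 :=
  eq_zero_of_mem_span_affinePullD_zero (hc0 ▸ h4 c hc δ hδ)

lemma SpanCond.intCast_eq_zero (h2 : SpanCond k F) (h3 : TransCond k F)
    (h0 : F (fun i => ((i : ℕ) : ℚ)) = 0) (c : Fin (k + 1) → ℤ) (hc : StrictMono c) :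
    F (fun i => (c i : ℚ)) = 0 := by
  refine strictMono_induction_on_knots (P := fun c => F (fun i => (c i : ℚ)) = 0) ?_ ?_ c hc
  · intro m
    have hnat : StrictMono fun i : Fin (k + 1) => ((i : ℕ) : ℚ) :=
      Nat.strictMono_cast.comp Fin.val_strictMono
    simpa only [Int.cast_add, Int.cast_natCast, add_comm] using h3.add_const_eq_zero hnat h0 m
  · intro c hc q hq0 hqk hqc α hα hrange hinit htail
    have hcast : StrictMono (Int.cast : ℤ → ℚ) := Int.cast_strictMono
    have hspan := h2 (Int.cast ∘ c) (hcast.comp hc) q (Int.cast_lt.mpr hq0)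
      (Int.cast_lt.mpr hqk) (by rwa [Set.range_comp, hcast.injective.mem_set_image])
      (Int.cast ∘ α) (hcast.comp hα)
      (by rw [Set.range_comp, Set.range_comp, hrange, Set.image_insert_eq])
    change F _ ∈ Submodule.span ℝ {F fun i => (Fin.init α i : ℚ), F fun i => (Fin.tail α i : ℚ)}
      at hspan
    rw [hinit, htail, Set.pair_eq_singleton, Submodule.span_zero_singleton,
      Submodule.mem_bot] at hspan
    exact hspan

end Conditions

theorem vanishing_at_equidistant_implies_zero_general (k : ℕ)
    (F : (Fin (k + 1) → ℚ) → DistR)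
    (h2 : SpanCond k F) (h3 : TransCond k F) (h4 : DilCond k F)
    (h0 : F (fun i => ((i : ℕ) : ℚ)) = 0) :
    ∀ a : Fin (k + 1) → ℚ, StrictMono a → F a = 0 := by
  intro a ha
  obtain ⟨N, hN, b, hb⟩ := exists_nat_mul_eq_intCast a
  have hNQ : (0 : ℚ) < N := by exact_mod_cast hN
  have hbQ : StrictMono fun i => (b i : ℚ) := fun i j hij => by
    simpa only [hb] using mul_lt_mul_of_pos_left (ha hij) hNQ
  have hb0 : F (fun i => (b i : ℚ)) = 0 :=
    h2.intCast_eq_zero h3 h0 b fun i j hij => Int.cast_lt.mp (hbQ hij)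
  convert h4.const_mul_eq_zero hbQ hb0 (inv_pos.mpr hNQ) using 2
  funext i
  rw [hb, inv_mul_cancel_left₀ hNQ.ne']

/-- If `F` satisfies conditions (i)–(iv) and `F(0, 1, …, k) = 0`, then `F` vanishes
identically on `P_k`. -/
theorem vanishing_at_equidistant_implies_zero (k : ℕ)
    (F : (Fin (k + 1) → ℚ) → DistR)
    (h1 : SuppCond k F) (h2 : SpanCond k F) (h3 : TransCond k F) (h4 : DilCond k F)
    (h0 : F (fun i => ((i : ℕ) : ℚ)) = 0) :
    ∀ a : Fin (k + 1) → ℚ, StrictMono a → F a = 0 :=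
  vanishing_at_equidistant_implies_zero_general k F h2 h3 h4 h0

end
end
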